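/- arXiv:1705.05038 — 5 statements merged into one kernel-verified Lean document; each statement's English description precedes it below -/
import Mathlib

section
/- The group generated by σ and τ (with σ(s,s') = (s',A(s)), τ(s,s') = (s',s)) acts freely on S² × S² ∖ (Δ ∪ Γ_A), where Δ = {(s,s)} is the diagonal and Γ_A = {(s,A(s))} is the graph of the antipodal map: every nontrivial element of ⟨σ,τ⟩ has all its fixed points contained in Δ ∪ Γ_A. -/
/-- The dihedral group ⟨σ,τ⟩ (σ(s,s') = (s',A(s)), τ(s,s') = (s',s)) acts freely
on S² × S² away from Δ ∪ Γ_A: if p is on S² × S² with p.1 ≠ p.2 and p.1 ≠ −p.2,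
then none of the seven nontrivial elements σ, σ², σ³, τ, στ, σ²τ, σ³τ fixes p. -/
theorem stmt5 (σ τ : (EuclideanSpace ℝ (Fin 3) × EuclideanSpace ℝ (Fin 3)) →
      (EuclideanSpace ℝ (Fin 3) × EuclideanSpace ℝ (Fin 3)))
    (hσ : ∀ p, σ p = (p.2, -p.1)) (hτ : ∀ p, τ p = (p.2, p.1))
    (p : EuclideanSpace ℝ (Fin 3) × EuclideanSpace ℝ (Fin 3))
    (h1 : ‖p.1‖ = 1) (h2 : ‖p.2‖ = 1)
    (hΔ : p.1 ≠ p.2) (hΓ : p.1 ≠ -p.2) :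
    σ p ≠ p ∧ σ (σ p) ≠ p ∧ σ (σ (σ p)) ≠ p ∧ τ p ≠ p ∧
    σ (τ p) ≠ p ∧ σ (σ (τ p)) ≠ p ∧ σ (σ (σ (τ p))) ≠ p := by
  have hp1 : p.1 ≠ 0 := by intro h; rw [h, norm_zero] at h1; norm_num at h1
  have hp2 : p.2 ≠ 0 := by intro h; rw [h, norm_zero] at h2; norm_num at h2
  have hne1 : -p.1 ≠ p.1 := fun h => hp1 (by
    have := congrArg (fun x => x + p.1) h
    simpa [neg_add_cancel, ← two_smul ℝ, smul_eq_zero] using this.symm)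
  have hne2 : -p.2 ≠ p.2 := fun h => hp2 (by
    have := congrArg (fun x => x + p.2) h
    simpa [neg_add_cancel, ← two_smul ℝ, smul_eq_zero] using this.symm)
  refine ⟨?_, ?_, ?_, ?_, ?_, ?_, ?_⟩ <;>
    simp only [hσ, hτ] <;> intro h <;> rw [Prod.ext_iff] at h <;> simp at h
  · exact hΔ h.1.symm
  · exact hne1 h.1
  · exact hΓ (by rw [← h.1])
  · exact hΔ h.2
  · exact hne2 h
  · exact hΓ (h.1 ▸ rfl)
  · exact hne1 h
end

section
/- Define g: RP² × RP² → RP⁴ in homogeneous coordinates by g([r:s:t],[r':s':t']) = [rr'−ss' : rs'+sr' : rt'+tr' : st'+ts' : tt']. Then g is well defined: the image vector is nonzero whenever (r,s,t) ≠ 0 and (r',s',t') ≠ 0, and the point of RP⁴ is independent of the homogeneous representatives. -/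
/-!
Identify `(r, s)` with `z = r + s i ∈ ℂ`. Then the first two coordinates of `gvec` are the real and
imaginary parts of `z z'`, the next two those of `z t' + t z'`, and the last is `t t'`: these are
the coefficients of the product `(z + t X) (z' + t' X)` in `ℂ[X]`, which vanishes only if a factor
does. Scaling the representatives by `l` and `m` scales `gvec` by `l m`, since `gvec` is bilinear.
-/

/-- g on homogeneous coordinates: for (r,s,t), (r',s',t') ∈ ℝ³, the vector
(rr'−ss', rs'+sr', rt'+tr', st'+ts', tt') ∈ ℝ⁵. -/
def gvec (a b : ℝ × ℝ × ℝ) : Fin 5 → ℝ :=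
  ![a.1 * b.1 - a.2.1 * b.2.1, a.1 * b.2.1 + a.2.1 * b.1,
    a.1 * b.2.2 + a.2.2 * b.1, a.2.1 * b.2.2 + a.2.2 * b.2.1,
    a.2.2 * b.2.2]

theorem linear_mul_linear_eq_zero {R : Type*} [CommRing R] [NoZeroDivisors R] {a b c d : R}
    (h0 : a * b = 0) (h1 : a * d + c * b = 0) (h2 : c * d = 0) :
    (a = 0 ∧ c = 0) ∨ (b = 0 ∧ d = 0) := by
  rcases mul_eq_zero.mp h2 with hc | hd
  · subst hc
    rcases mul_eq_zero.mp h0 with ha | hb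
    · exact .inl ⟨ha, rfl⟩
    · subst hb
      simp only [zero_mul, add_zero, mul_eq_zero] at h1
      exact h1.imp (⟨·, rfl⟩) (⟨rfl, ·⟩)
  · subst hd
    rcases mul_eq_zero.mp h0 with ha | hb
    · subst ha
      simp only [zero_mul, zero_add, mul_eq_zero] at h1
      exact h1.imp (⟨rfl, ·⟩) (⟨·, rfl⟩)
    · exact .inr ⟨hb, rfl⟩

def planarPart (a : ℝ × ℝ × ℝ) : ℂ := ⟨a.1, a.2.1⟩

theorem eq_zero_of_planarPart_eq_zero {a : ℝ × ℝ × ℝ} (hz : planarPart a = 0)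
    (ht : (a.2.2 : ℂ) = 0) : a = 0 := by
  obtain ⟨r, s, t⟩ := a
  simp_all [planarPart, Complex.ext_iff]

theorem gvec_eq_zero_iff (a b : ℝ × ℝ × ℝ) :
    gvec a b = 0 ↔ planarPart a * planarPart b = 0 ∧
      planarPart a * b.2.2 + a.2.2 * planarPart b = 0 ∧ (a.2.2 : ℂ) * b.2.2 = 0 := by
  simp only [funext_iff, Fin.forall_fin_succ, IsEmpty.forall_iff, Complex.ext_iff, planarPart,
    ← Complex.ofReal_mul]
  simp [gvec, and_assoc]

theorem gvec_ne_zero {a b : ℝ × ℝ × ℝ} (ha : a ≠ 0) (hb : b ≠ 0) : gvec a b ≠ 0 := by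
  intro h
  obtain ⟨h0, h1, h2⟩ := (gvec_eq_zero_iff a b).mp h
  rcases linear_mul_linear_eq_zero h0 h1 h2 with ⟨hz, ht⟩ | ⟨hz, ht⟩
  · exact ha (eq_zero_of_planarPart_eq_zero hz ht)
  · exact hb (eq_zero_of_planarPart_eq_zero hz ht)

theorem gvec_smul_smul (a b : ℝ × ℝ × ℝ) (l m : ℝ) :
    gvec (l • a) (m • b) = (l * m) • gvec a b := by
  funext i
  fin_cases i <;> simp [gvec] <;> ring

/-- g([r:s:t],[r':s':t']) = [rr'−ss' : rs'+sr' : rt'+tr' : st'+ts' : tt'] is a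
well-defined map RP² × RP² → RP⁴: the image vector is nonzero for nonzero inputs,
and rescaling the homogeneous representatives rescales the image vector by a
nonzero real scalar. -/
theorem stmt16 :
    (∀ a b : ℝ × ℝ × ℝ, a ≠ 0 → b ≠ 0 → gvec a b ≠ 0) ∧
    (∀ a b : ℝ × ℝ × ℝ, ∀ l m : ℝ, l ≠ 0 → m ≠ 0 →
      ∃ n : ℝ, n ≠ 0 ∧ gvec (l • a) (m • b) = n • gvec a b) :=
  ⟨fun _ _ ha hb => gvec_ne_zero ha hb,
    fun a b l m hl hm => ⟨l * m, mul_ne_zero hl hm, gvec_smul_smul a b l m⟩⟩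
end

section
/- For unit vectors (r,s,t), (r',s',t') ∈ S² ⊂ ℝ³, the squared Euclidean norm of the vector (rr'−ss', rs'+sr', rt'+tr', st'+ts', tt') ∈ ℝ⁵ equals 1 + 2tt'(rr'+ss'), which is positive; in particular its Euclidean norm equals √(1 + 2tt'(rr'+ss')) and this vector is never zero. -/
/-- For unit vectors (r,s,t), (r',s',t') ∈ S² ⊂ ℝ³, the squared Euclidean norm of
(rr'−ss', rs'+sr', rt'+tr', st'+ts', tt') ∈ ℝ⁵ equals 1 + 2tt'(rr'+ss'), which is
positive; hence the norm of the vector is √(1 + 2tt'(rr'+ss')) and the vector is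
never zero. -/
theorem stmt17 (r s t r' s' t' : ℝ)
    (h : r ^ 2 + s ^ 2 + t ^ 2 = 1) (h' : r' ^ 2 + s' ^ 2 + t' ^ 2 = 1) :
    (r * r' - s * s') ^ 2 + (r * s' + s * r') ^ 2 + (r * t' + t * r') ^ 2 +
        (s * t' + t * s') ^ 2 + (t * t') ^ 2
      = 1 + 2 * t * t' * (r * r' + s * s') ∧
    0 < 1 + 2 * t * t' * (r * r' + s * s') := by
  have key : (r * r' - s * s') ^ 2 + (r * s' + s * r') ^ 2 + (r * t' + t * r') ^ 2 +
        (s * t' + t * s') ^ 2 + (t * t') ^ 2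
      = 1 + 2 * t * t' * (r * r' + s * s') := by
    linear_combination (r' ^ 2 + s' ^ 2 + t' ^ 2) * h + h'
  refine ⟨key, ?_⟩
  nlinarith [sq_nonneg (r*s'-s*r'), sq_nonneg (2*t^2-1), sq_nonneg (2*t'^2-1),
    sq_nonneg (t*t'), sq_nonneg (2*t*t'*(r*r'+s*s')+1), sq_nonneg (r*r'+s*s'),
    mul_nonneg (sq_nonneg (2*t^2-1)) (sq_nonneg (2*t'^2-1)), h, h']
end

section
/- The map φ: S²×S² → ℂ²×ℝ ∖ {0} given by φ((z,t),(z',t')) = (zz', zt'+tz', tt') (with S² ⊂ ℂ×ℝ) is invariant under σ² and under τ, where σ((z,t),(z',t')) = ((z',t'), (−z,−t)) and τ swaps the factors: φ∘σ² = φ and φ∘τ = φ, and φ never takes the value 0. -/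
/-- φ((z,t),(z',t')) = (zz', zt'+tz', tt') ∈ ℂ × ℂ × ℝ. -/
def phiMap (z : ℂ) (t : ℝ) (z' : ℂ) (t' : ℝ) : ℂ × ℂ × ℝ :=
  (z * z', z * t' + t * z', t * t')

/-- For points (z,t), (z',t') of S² ⊂ ℂ × ℝ, the map φ((z,t),(z',t')) =
(zz', zt'+tz', tt') is invariant under σ² (simultaneous antipodal map on both
factors) and under the swap τ, and never takes the value 0. -/
theorem stmt18 (z z' : ℂ) (t t' : ℝ)
    (h : ‖z‖ ^ 2 + t ^ 2 = 1) (h' : ‖z'‖ ^ 2 + t' ^ 2 = 1) :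
    phiMap (-z) (-t) (-z') (-t') = phiMap z t z' t' ∧
    phiMap z' t' z t = phiMap z t z' t' ∧
    phiMap z t z' t' ≠ 0 := by
  refine ⟨by simp only [phiMap]; push_cast; refine Prod.ext ?_ (Prod.ext ?_ ?_) <;> ring,
          by simp only [phiMap]; refine Prod.ext ?_ (Prod.ext ?_ ?_) <;> ring, ?_⟩
  intro hc
  rw [phiMap, Prod.ext_iff, Prod.ext_iff] at hc
  obtain ⟨h1, h2, h3⟩ := hc
  simp only [Prod.fst_zero, Prod.snd_zero] at h1 h2 h3
  rcases mul_eq_zero.1 h3 with ht | ht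
  · subst ht
    have hz : z ≠ 0 := by intro hz0; rw [hz0] at h; simp at h
    have hz' : z' = 0 := by rcases mul_eq_zero.1 h1 with h0 | h0; exact absurd h0 hz; exact h0
    subst hz'
    have ht' : t' ≠ 0 := by intro h0; rw [h0] at h'; simp at h'
    simp at h2
    rcases h2 with h0 | h0
    · exact hz h0
    · exact ht' (by exact_mod_cast h0)
  · subst ht
    have hz' : z' ≠ 0 := by intro hz0; rw [hz0] at h'; simp at h'
    have hz : z = 0 := by rcases mul_eq_zero.1 h1 with h0 | h0; exact h0; exact absurd h0 hz'
    subst hz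
    have htn : t ≠ 0 := by intro h0; rw [h0] at h; simp at h
    simp at h2
    rcases h2 with h0 | h0
    · exact htn (by exact_mod_cast h0)
    · exact hz' h0
end

section
/- For every (z₀,z₁,z₂) ∈ ℂ³ ∖ {0}, the vector (4 z₀ z̄₂, 2 z₀ z̄₁ − 2 z₁ z̄₂, |z₀|² + |z₂|² − ½|z₁|² − ½|z₁² − 4 z₀ z₂|) ∈ ℂ × ℂ × ℝ is nonzero, and it is invariant under scaling (z₀,z₁,z₂) by a unit complex number up to the induced action; in particular the formula G([z₀:z₁:z₂]) = ν(4 z₀ z̄₂, 2 z₀ z̄₁ − 2 z₁ z̄₂, |z₀|²+|z₂|²−½|z₁|²−½|z₁²−4z₀z₂|), with ν the radial normalization, defines a continuous map from CP² (viewed via unit-norm homogeneous coordinates) to S⁴. -/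
/-- The (unnormalized) vector defining G: for (z₀,z₁,z₂) ∈ ℂ³,
(4z₀z̄₂, 2z₀z̄₁ − 2z₁z̄₂, |z₀|² + |z₂|² − ½|z₁|² − ½|z₁² − 4z₀z₂|) ∈ ℂ × ℂ × ℝ. -/
noncomputable def Gvec (z : ℂ × ℂ × ℂ) : ℂ × ℂ × ℝ :=
  (4 * z.1 * (starRingEnd ℂ) z.2.2,
   2 * z.1 * (starRingEnd ℂ) z.2.1 - 2 * z.2.1 * (starRingEnd ℂ) z.2.2,
   ‖z.1‖ ^ 2 + ‖z.2.2‖ ^ 2 - ‖z.2.1‖ ^ 2 / 2 - ‖z.2.1 ^ 2 - 4 * z.1 * z.2.2‖ / 2)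

/-- Euclidean norm on ℂ × ℂ × ℝ ≅ ℝ⁵. -/
noncomputable def enorm5 (v : ℂ × ℂ × ℝ) : ℝ :=
  Real.sqrt (‖v.1‖ ^ 2 + ‖v.2.1‖ ^ 2 + v.2.2 ^ 2)

/-!
The first coordinate of `Gvec z` vanishes only if `z₀ z₂ = 0`; then the discriminant term
`|z₁² − 4 z₀ z₂|` equals `|z₁|²`, so the last coordinate reads `|z₀|² + |z₂|² − |z₁|²`, while
the second coordinate gives `|z₀| |z₁| = |z₁| |z₂|`. These three relations among the moduli
force `z = 0`. Invariance under a unit scalar `λ` holds because the first two coordinates are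
sesquilinear (they pick up `λ λ̄ = 1`) and the discriminant picks up `λ²`, of modulus one.
-/

theorem enorm5_smul (r : ℝ) (v : ℂ × ℂ × ℝ) : enorm5 (r • v) = |r| * enorm5 v := by
  simp only [enorm5, Prod.smul_fst, Prod.smul_snd, norm_smul, Real.norm_eq_abs, smul_eq_mul,
    mul_pow, sq_abs]
  rw [← Real.sqrt_sq_eq_abs, ← Real.sqrt_mul (sq_nonneg r)]
  ring_nf

theorem enorm5_pos {v : ℂ × ℂ × ℝ} (hv : v ≠ 0) : 0 < enorm5 v := by
  obtain ⟨a, b, c⟩ := v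
  refine Real.sqrt_pos.mpr (lt_of_le_of_ne (by positivity) fun h => hv ?_)
  have ha : ‖a‖ = 0 := by nlinarith [sq_nonneg ‖a‖, sq_nonneg ‖b‖, sq_nonneg c]
  have hb : ‖b‖ = 0 := by nlinarith [sq_nonneg ‖a‖, sq_nonneg ‖b‖, sq_nonneg c]
  have hc : c = 0 := by nlinarith [sq_nonneg ‖a‖, sq_nonneg ‖b‖, sq_nonneg c]
  rw [norm_eq_zero.mp ha, norm_eq_zero.mp hb, hc]
  rfl

theorem Gvec_eq_zero_iff {z : ℂ × ℂ × ℂ} : Gvec z = 0 ↔ z = 0 := by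
  refine ⟨fun h => ?_, fun h => by simp [h, Gvec]⟩
  obtain ⟨a, b, c⟩ := z
  simp only [Gvec, Prod.mk_eq_zero] at h
  obtain ⟨h₁, h₂, h₃⟩ := h
  have hac : ‖a‖ * ‖c‖ = 0 := by simpa using congrArg norm h₁
  have hab : ‖a‖ * ‖b‖ = ‖b‖ * ‖c‖ := by
    have : a * (starRingEnd ℂ) b = b * (starRingEnd ℂ) c := by linear_combination h₂ / 2
    simpa using congrArg norm this
  have hsq : ‖a‖ ^ 2 + ‖c‖ ^ 2 = ‖b‖ ^ 2 := by
    have hdisc : b ^ 2 - 4 * a * c = b ^ 2 := by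
      rw [sub_eq_self, mul_assoc, mul_eq_zero_of_right]
      simpa using hac
    rw [hdisc, norm_pow] at h₃
    linarith
  have hb : ‖b‖ = 0 := by
    -- in the moduli: `b³ = b (a² + c²) = (a − c)(a b − b c) + 2 b (a c)`
    have : ‖b‖ ^ 3 = 0 := by
      linear_combination (-‖b‖) * hsq + (‖a‖ - ‖c‖) * hab + 2 * ‖b‖ * hac
    exact pow_eq_zero_iff three_ne_zero |>.mp this
  have ha : ‖a‖ = 0 := by nlinarith [norm_nonneg a, norm_nonneg c]
  have hc : ‖c‖ = 0 := by nlinarith [norm_nonneg a, norm_nonneg c]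
  rw [norm_eq_zero.mp ha, norm_eq_zero.mp hb, norm_eq_zero.mp hc]
  rfl

theorem Gvec_unit_smul {l : ℂ} (hl : ‖l‖ = 1) (z : ℂ × ℂ × ℂ) :
    Gvec (l * z.1, l * z.2.1, l * z.2.2) = Gvec z := by
  have hl' : l * (starRingEnd ℂ) l = 1 := by
    rw [Complex.mul_conj, Complex.normSq_eq_norm_sq, hl]; norm_num
  have hdisc : (l * z.2.1) ^ 2 - 4 * (l * z.1) * (l * z.2.2) =
      l ^ 2 * (z.2.1 ^ 2 - 4 * z.1 * z.2.2) := by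
    ring
  simp only [Gvec, map_mul, hdisc, norm_mul, norm_pow, hl, one_pow, one_mul, Prod.mk.injEq,
    and_true]
  constructor
  · linear_combination 4 * z.1 * (starRingEnd ℂ) z.2.2 * hl'
  · linear_combination (2 * z.1 * (starRingEnd ℂ) z.2.1 - 2 * z.2.1 * (starRingEnd ℂ) z.2.2) * hl'

/-- For (z₀,z₁,z₂) ≠ 0 the vector Gvec(z₀,z₁,z₂) is nonzero, is unchanged when
(z₀,z₁,z₂) is multiplied by a unit complex scalar, and its radial normalization
ν(Gvec z) lies on S⁴ (has Euclidean norm 1); hence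
G([z₀:z₁:z₂]) = ν(Gvec(z₀,z₁,z₂)) defines a map CP² → S⁴. -/
theorem stmt19 (z : ℂ × ℂ × ℂ) (hz : z ≠ 0) :
    Gvec z ≠ 0 ∧
    (∀ l : ℂ, ‖l‖ = 1 → Gvec (l * z.1, l * z.2.1, l * z.2.2) = Gvec z) ∧
    0 < enorm5 (Gvec z) ∧
    enorm5 ((enorm5 (Gvec z))⁻¹ • Gvec z) = 1 := by
  have hG : Gvec z ≠ 0 := Gvec_eq_zero_iff.not.mpr hz
  have hpos : 0 < enorm5 (Gvec z) := enorm5_pos hG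
  refine ⟨hG, fun l hl => Gvec_unit_smul hl z, hpos, ?_⟩
  rw [enorm5_smul, abs_inv, abs_of_pos hpos, inv_mul_cancel₀ hpos.ne']
end
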